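/- Let λ, λ̂ ∈ ℝ with λ̂ ≠ λ, and let z, ρ, ρ̂ : ℝ² → ℝ be smooth (C^∞) functions of (x,t) with ρ̂(x,t) ≠ ρ(x,t) for all (x,t), satisfying z_t = −6 z z_x − z_xxx, the Riccati system ρ_x = −ρ² − z − λ, ρ_t = −2(2λ − z)ρ² − 2 z_x ρ + z_xx + 2z² − 2λz − 4λ², and the Riccati system ρ̂_x = −ρ̂² − z − λ̂, ρ̂_t = −2(2λ̂ − z)ρ̂² − 2 z_x ρ̂ + z_xx + 2z² − 2λ̂z − 4λ̂². Define z' := −z − 2ρ̂² − 2λ̂ and ρ' := −(λ̂ − λ)/(ρ̂ − ρ) − ρ̂. Then z'_t = −6 z' z'_x − z'_xxx, ρ'_x = −ρ'² − z' − λ, and ρ'_t = −2(2λ − z')ρ'² − 2 z'_x ρ' + z'_xx + 2z'² − 2λz' − 4λ². -/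

import Mathlib

/-!
Both Riccati equations let every derivative of `ρ` and `ρ̂` be eliminated: `ρ̂_x = -q` with
`q = ρ̂² + z + λ̂`, so `z'_x = -z_x + 4ρ̂q`, and iterating expresses `z'_xx`, `z'_xxx` as
polynomials in `ρ̂, z, z_x, z_xx, z_xxx`. Using KdV for `z_t` and the `t`-equation for `ρ̂_t`,
KdV for `z'` becomes a polynomial identity. For `ρ'` the quotient rule gives
`ρ'_x = (λ̂ - λ)(ρ̂_x - ρ_x)/(ρ̂ - ρ)² - ρ̂_x`, and after the same substitutions both Riccati
equations for `ρ'` are rational identities with denominator a power of `ρ̂ - ρ`. Beyond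
differentiability of `ρ` and `ρ̂`, this needs only `z ∈ C³`, so that `z_x` and `z_xx` can be
differentiated again.
-/

/-- Partial derivative in the first variable `x`. -/
noncomputable def px (f : ℝ → ℝ → ℝ) : ℝ → ℝ → ℝ := fun x t => deriv (fun y => f y t) x

/-- Partial derivative in the second variable `t`. -/
noncomputable def pt (f : ℝ → ℝ → ℝ) : ℝ → ℝ → ℝ := fun x t => deriv (fun s => f x s) t

open Function

section PartialDerivatives

variable {f : ℝ → ℝ → ℝ}

theorem hasDerivAt_px (hf : Differentiable ℝ (uncurry f)) (x t : ℝ) :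
    HasDerivAt (fun y => f y t) (px f x t) x :=
  (hf.comp (differentiable_id.prodMk (differentiable_const t)) x).hasDerivAt

theorem hasDerivAt_pt (hf : Differentiable ℝ (uncurry f)) (x t : ℝ) :
    HasDerivAt (f x) (pt f x t) t :=
  (hf.comp ((differentiable_const x).prodMk differentiable_id) t).hasDerivAt

theorem px_eq_fderiv (hf : Differentiable ℝ (uncurry f)) (x t : ℝ) :
    px f x t = fderiv ℝ (uncurry f) (x, t) (1, 0) := by
  have hline : HasDerivAt (fun y => (y, t)) ((1 : ℝ), (0 : ℝ)) x :=
    (hasDerivAt_id x).prodMk (hasDerivAt_const x t)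
  exact ((hf (x, t)).hasFDerivAt.comp_hasDerivAt x hline).deriv

theorem contDiff_px {n : WithTop ℕ∞} (hf : ContDiff ℝ (n + 1) (uncurry f)) :
    ContDiff ℝ n (uncurry (px f)) := by
  have hdiff : Differentiable ℝ (uncurry f) := hf.differentiable (by simp)
  have : uncurry (px f) = fun p => fderiv ℝ (uncurry f) p (1, 0) := by
    funext p
    exact px_eq_fderiv hdiff p.1 p.2
  rw [this]
  exact (hf.fderiv_right le_rfl).clm_apply contDiff_const

def IsKdV (z : ℝ → ℝ → ℝ) : Prop :=
  ∀ x t, pt z x t = -6 * z x t * px z x t - px (px (px z)) x t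

def IsRiccatiX (lam : ℝ) (z ρ : ℝ → ℝ → ℝ) : Prop :=
  ∀ x t, px ρ x t = -(ρ x t) ^ 2 - z x t - lam

def IsRiccatiT (lam : ℝ) (z ρ : ℝ → ℝ → ℝ) : Prop :=
  ∀ x t, pt ρ x t
    = -2 * (2 * lam - z x t) * (ρ x t) ^ 2 - 2 * px z x t * ρ x t
      + px (px z) x t + 2 * (z x t) ^ 2 - 2 * lam * z x t - 4 * lam ^ 2

def darbouxPotential (lamh : ℝ) (z ρh : ℝ → ℝ → ℝ) : ℝ → ℝ → ℝ :=
  fun x t => -z x t - 2 * (ρh x t) ^ 2 - 2 * lamh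

noncomputable def darbouxRiccati (lam lamh : ℝ) (ρ ρh : ℝ → ℝ → ℝ) : ℝ → ℝ → ℝ :=
  fun x t => -(lamh - lam) / (ρh x t - ρ x t) - ρh x t

theorem HasDerivAt.darboux {a b : ℝ → ℝ} {a' b' s : ℝ} (ha : HasDerivAt a a' s)
    (hb : HasDerivAt b b' s) (hab : a s ≠ b s) (c : ℝ) :
    HasDerivAt (fun s => -c / (a s - b s) - a s) (c * (a' - b') / (a s - b s) ^ 2 - a') s := by
  refine (((hasDerivAt_const s (-c)).fun_div (ha.fun_sub hb) (sub_ne_zero.mpr hab)).fun_sub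
    ha).congr_deriv ?_
  ring

section Darboux

variable {lam lamh : ℝ} {z ρ ρh : ℝ → ℝ → ℝ}

theorem px_darbouxPotential (hz : Differentiable ℝ (uncurry z))
    (hρh : Differentiable ℝ (uncurry ρh)) (hρhx : IsRiccatiX lamh z ρh) :
    px (darbouxPotential lamh z ρh)
      = fun x t => -px z x t + 4 * ρh x t * (ρh x t ^ 2 + z x t + lamh) := by
  funext x t
  have hD := ((hasDerivAt_px hz x t).neg.sub
    (((hasDerivAt_px hρh x t).pow 2).const_mul 2)).sub_const (2 * lamh)
  refine hD.deriv.trans ?_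
  rw [hρhx x t]
  ring

theorem px_px_darbouxPotential (hz : ContDiff ℝ 2 (uncurry z))
    (hρh : Differentiable ℝ (uncurry ρh)) (hρhx : IsRiccatiX lamh z ρh) :
    px (px (darbouxPotential lamh z ρh))
      = fun x t => -px (px z) x t - 4 * (ρh x t ^ 2 + z x t + lamh) ^ 2
          - 8 * ρh x t ^ 2 * (ρh x t ^ 2 + z x t + lamh) + 4 * ρh x t * px z x t := by
  have hz' : Differentiable ℝ (uncurry z) := hz.differentiable (by simp)
  have hzx : Differentiable ℝ (uncurry (px z)) :=
    (contDiff_px (n := 1) hz).differentiable (by simp)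
  rw [px_darbouxPotential hz' hρh hρhx]
  funext x t
  have hD := (hasDerivAt_px hzx x t).neg.add (((hasDerivAt_px hρh x t).const_mul 4).mul
    ((((hasDerivAt_px hρh x t).pow 2).add (hasDerivAt_px hz' x t)).add_const lamh))
  refine hD.deriv.trans ?_
  rw [hρhx x t]
  simp only [Pi.add_apply, Pi.pow_apply]
  ring

theorem px_px_px_darbouxPotential (hz : ContDiff ℝ 3 (uncurry z))
    (hρh : Differentiable ℝ (uncurry ρh)) (hρhx : IsRiccatiX lamh z ρh) (x t : ℝ) :
    px (px (px (darbouxPotential lamh z ρh))) x t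
      = -px (px (px z)) x t + 32 * ρh x t * (ρh x t ^ 2 + z x t + lamh) ^ 2
          + 16 * ρh x t ^ 3 * (ρh x t ^ 2 + z x t + lamh)
          - 12 * (ρh x t ^ 2 + z x t + lamh) * px z x t - 8 * ρh x t ^ 2 * px z x t
          + 4 * ρh x t * px (px z) x t := by
  have hz' : Differentiable ℝ (uncurry z) := hz.differentiable (by simp)
  have hzx : ContDiff ℝ 2 (uncurry (px z)) := contDiff_px (n := 2) hz
  have hzx' : Differentiable ℝ (uncurry (px z)) := hzx.differentiable (by simp)
  have hzxx : Differentiable ℝ (uncurry (px (px z))) :=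
    (contDiff_px (n := 1) hzx).differentiable (by simp)
  have hq := (((hasDerivAt_px hρh x t).pow 2).add (hasDerivAt_px hz' x t)).add_const lamh
  have hD := ((((hasDerivAt_px hzxx x t).neg.sub (hq.pow 2 |>.const_mul 4)).sub
    ((((hasDerivAt_px hρh x t).pow 2).const_mul 8).mul hq)).add
    (((hasDerivAt_px hρh x t).const_mul 4).mul (hasDerivAt_px hzx' x t)))
  rw [px_px_darbouxPotential (hz.of_le (by norm_num)) hρh hρhx]
  refine hD.deriv.trans ?_
  rw [hρhx x t]
  simp only [Pi.add_apply, Pi.pow_apply]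
  ring

theorem pt_darbouxPotential (hz : Differentiable ℝ (uncurry z))
    (hρh : Differentiable ℝ (uncurry ρh)) (x t : ℝ) :
    pt (darbouxPotential lamh z ρh) x t = -pt z x t - 4 * ρh x t * pt ρh x t := by
  have hD := ((hasDerivAt_pt hz x t).neg.sub
    (((hasDerivAt_pt hρh x t).pow 2).const_mul 2)).sub_const (2 * lamh)
  exact hD.deriv.trans (by ring)

theorem isKdV_darbouxPotential (hz : ContDiff ℝ 3 (uncurry z))
    (hρh : Differentiable ℝ (uncurry ρh)) (hkdv : IsKdV z) (hρhx : IsRiccatiX lamh z ρh)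
    (hρht : IsRiccatiT lamh z ρh) : IsKdV (darbouxPotential lamh z ρh) := by
  intro x t
  have hz' : Differentiable ℝ (uncurry z) := hz.differentiable (by simp)
  rw [pt_darbouxPotential hz' hρh, px_px_px_darbouxPotential hz hρh hρhx,
    px_darbouxPotential hz' hρh hρhx, hkdv x t, hρht x t]
  simp only [darbouxPotential]
  ring

theorem isRiccatiX_darbouxRiccati (hρ : Differentiable ℝ (uncurry ρ))
    (hρh : Differentiable ℝ (uncurry ρh)) (hsep : ∀ x t, ρh x t ≠ ρ x t)
    (hρx : IsRiccatiX lam z ρ) (hρhx : IsRiccatiX lamh z ρh) :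
    IsRiccatiX lam (darbouxPotential lamh z ρh) (darbouxRiccati lam lamh ρ ρh) := by
  intro x t
  refine ((hasDerivAt_px hρh x t).darboux (hasDerivAt_px hρ x t) (hsep x t) _).deriv.trans ?_
  have hden : ρh x t - ρ x t ≠ 0 := sub_ne_zero.mpr (hsep x t)
  rw [hρx x t, hρhx x t]
  simp only [darbouxPotential, darbouxRiccati]
  field_simp
  ring

theorem isRiccatiT_darbouxRiccati (hz : ContDiff ℝ 2 (uncurry z))
    (hρ : Differentiable ℝ (uncurry ρ)) (hρh : Differentiable ℝ (uncurry ρh))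
    (hsep : ∀ x t, ρh x t ≠ ρ x t) (hρhx : IsRiccatiX lamh z ρh) (hρt : IsRiccatiT lam z ρ)
    (hρht : IsRiccatiT lamh z ρh) :
    IsRiccatiT lam (darbouxPotential lamh z ρh) (darbouxRiccati lam lamh ρ ρh) := by
  intro x t
  refine ((hasDerivAt_pt hρh x t).darboux (hasDerivAt_pt hρ x t) (hsep x t) _).deriv.trans ?_
  have hden : ρh x t - ρ x t ≠ 0 := sub_ne_zero.mpr (hsep x t)
  rw [hρt x t, hρht x t, px_px_darbouxPotential hz hρh hρhx,
    px_darbouxPotential (hz.differentiable (by simp)) hρh hρhx]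
  simp only [darbouxPotential, darbouxRiccati]
  field_simp
  ring

end Darboux

theorem kdv_darboux_general (lam lamh : ℝ) (z ρ ρh : ℝ → ℝ → ℝ)
    (hz : ContDiff ℝ (⊤ : ℕ∞) (Function.uncurry z))
    (hρ : ContDiff ℝ (⊤ : ℕ∞) (Function.uncurry ρ))
    (hρh : ContDiff ℝ (⊤ : ℕ∞) (Function.uncurry ρh))
    (hsep : ∀ x t, ρh x t ≠ ρ x t)
    (hkdv : ∀ x t, pt z x t = -6 * z x t * px z x t - px (px (px z)) x t)
    (hρx : ∀ x t, px ρ x t = -(ρ x t) ^ 2 - z x t - lam)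
    (hρt : ∀ x t, pt ρ x t
      = -2 * (2 * lam - z x t) * (ρ x t) ^ 2 - 2 * px z x t * ρ x t
        + px (px z) x t + 2 * (z x t) ^ 2 - 2 * lam * z x t - 4 * lam ^ 2)
    (hρhx : ∀ x t, px ρh x t = -(ρh x t) ^ 2 - z x t - lamh)
    (hρht : ∀ x t, pt ρh x t
      = -2 * (2 * lamh - z x t) * (ρh x t) ^ 2 - 2 * px z x t * ρh x t
        + px (px z) x t + 2 * (z x t) ^ 2 - 2 * lamh * z x t - 4 * lamh ^ 2) :
    ∀ x t,
      pt (fun x t => -z x t - 2 * (ρh x t) ^ 2 - 2 * lamh) x t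
          = -6 * (-z x t - 2 * (ρh x t) ^ 2 - 2 * lamh)
              * px (fun x t => -z x t - 2 * (ρh x t) ^ 2 - 2 * lamh) x t
            - px (px (px (fun x t => -z x t - 2 * (ρh x t) ^ 2 - 2 * lamh))) x t
      ∧ px (fun x t => -(lamh - lam) / (ρh x t - ρ x t) - ρh x t) x t
          = -(-(lamh - lam) / (ρh x t - ρ x t) - ρh x t) ^ 2
            - (-z x t - 2 * (ρh x t) ^ 2 - 2 * lamh) - lam
      ∧ pt (fun x t => -(lamh - lam) / (ρh x t - ρ x t) - ρh x t) x t
          = -2 * (2 * lam - (-z x t - 2 * (ρh x t) ^ 2 - 2 * lamh))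
              * (-(lamh - lam) / (ρh x t - ρ x t) - ρh x t) ^ 2
            - 2 * px (fun x t => -z x t - 2 * (ρh x t) ^ 2 - 2 * lamh) x t
              * (-(lamh - lam) / (ρh x t - ρ x t) - ρh x t)
            + px (px (fun x t => -z x t - 2 * (ρh x t) ^ 2 - 2 * lamh)) x t
            + 2 * (-z x t - 2 * (ρh x t) ^ 2 - 2 * lamh) ^ 2
            - 2 * lam * (-z x t - 2 * (ρh x t) ^ 2 - 2 * lamh) - 4 * lam ^ 2 := by
  have hρ' : Differentiable ℝ (uncurry ρ) := hρ.differentiable (by simp)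
  have hρh' : Differentiable ℝ (uncurry ρh) := hρh.differentiable (by simp)
  intro x t
  exact ⟨isKdV_darbouxPotential (contDiff_infty.mp hz 3) hρh' hkdv hρhx hρht x t,
    isRiccatiX_darbouxRiccati hρ' hρh' hsep hρx hρhx x t,
    isRiccatiT_darbouxRiccati (contDiff_infty.mp hz 2) hρ' hρh' hsep hρhx hρt hρht x t⟩

/-- the Darboux transformation of KdV,
`z' = −z − 2ρ̂² − 2λ̂`, `ρ' = −(λ̂−λ)/(ρ̂−ρ) − ρ̂`, maps a solution of the doubled
Riccati covering of KdV to a solution of the Riccati-extended KdV system with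
parameter `λ`. -/
theorem kdv_darboux (lam lamh : ℝ) (hne : lamh ≠ lam) (z ρ ρh : ℝ → ℝ → ℝ)
    (hz : ContDiff ℝ (⊤ : ℕ∞) (Function.uncurry z))
    (hρ : ContDiff ℝ (⊤ : ℕ∞) (Function.uncurry ρ))
    (hρh : ContDiff ℝ (⊤ : ℕ∞) (Function.uncurry ρh))
    (hsep : ∀ x t, ρh x t ≠ ρ x t)
    (hkdv : ∀ x t, pt z x t = -6 * z x t * px z x t - px (px (px z)) x t)
    (hρx : ∀ x t, px ρ x t = -(ρ x t) ^ 2 - z x t - lam)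
    (hρt : ∀ x t, pt ρ x t
      = -2 * (2 * lam - z x t) * (ρ x t) ^ 2 - 2 * px z x t * ρ x t
        + px (px z) x t + 2 * (z x t) ^ 2 - 2 * lam * z x t - 4 * lam ^ 2)
    (hρhx : ∀ x t, px ρh x t = -(ρh x t) ^ 2 - z x t - lamh)
    (hρht : ∀ x t, pt ρh x t
      = -2 * (2 * lamh - z x t) * (ρh x t) ^ 2 - 2 * px z x t * ρh x t
        + px (px z) x t + 2 * (z x t) ^ 2 - 2 * lamh * z x t - 4 * lamh ^ 2) :
    ∀ x t,
      pt (fun x t => -z x t - 2 * (ρh x t) ^ 2 - 2 * lamh) x t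
          = -6 * (-z x t - 2 * (ρh x t) ^ 2 - 2 * lamh)
              * px (fun x t => -z x t - 2 * (ρh x t) ^ 2 - 2 * lamh) x t
            - px (px (px (fun x t => -z x t - 2 * (ρh x t) ^ 2 - 2 * lamh))) x t
      ∧ px (fun x t => -(lamh - lam) / (ρh x t - ρ x t) - ρh x t) x t
          = -(-(lamh - lam) / (ρh x t - ρ x t) - ρh x t) ^ 2
            - (-z x t - 2 * (ρh x t) ^ 2 - 2 * lamh) - lam
      ∧ pt (fun x t => -(lamh - lam) / (ρh x t - ρ x t) - ρh x t) x t
          = -2 * (2 * lam - (-z x t - 2 * (ρh x t) ^ 2 - 2 * lamh))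
              * (-(lamh - lam) / (ρh x t - ρ x t) - ρh x t) ^ 2
            - 2 * px (fun x t => -z x t - 2 * (ρh x t) ^ 2 - 2 * lamh) x t
              * (-(lamh - lam) / (ρh x t - ρ x t) - ρh x t)
            + px (px (fun x t => -z x t - 2 * (ρh x t) ^ 2 - 2 * lamh)) x t
            + 2 * (-z x t - 2 * (ρh x t) ^ 2 - 2 * lamh) ^ 2
            - 2 * lam * (-z x t - 2 * (ρh x t) ^ 2 - 2 * lamh) - 4 * lam ^ 2 :=
  kdv_darboux_general lam lamh z ρ ρh hz hρ hρh hsep hkdv hρx hρt hρhx hρht
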